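/- arXiv:0912.0726 — 7 statements merged into one kernel-verified Lean document; each statement's English description precedes it below -/
import Mathlib

section
/- Let W be a real random variable with E[W] = 0 and E[W^2] = σ² > 0. Define p(w) := σ^{-2}·E[W·1{W > w}] for w ≥ 0 and p(w) := σ^{-2}·E[(-W)·1{W < w}] for w < 0. Then p is nonnegative and integrates to 1 over the real line, i.e., p is a probability density. -/
/-!
Write `p w = σ⁻² ∫ k w (W ω)`, where `k w x ≥ 0` is `x` on `0 ≤ w < x` and `-x` on `x < w < 0`.
For fixed `x`, `w ↦ k w x` is the constant `|x|` on an interval of length `|x|`, so it has integral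
`x ^ 2`; by Fubini, `∫ p = σ⁻² E[W ^ 2] = 1`.
-/

open MeasureTheory Set

noncomputable def zeroBiasKernel (w x : ℝ) : ℝ :=
  if 0 ≤ w then (if w < x then x else 0) else (if x < w then -x else 0)

lemma zeroBiasKernel_nonneg (w x : ℝ) : 0 ≤ zeroBiasKernel w x := by
  unfold zeroBiasKernel
  split_ifs <;> linarith

lemma measurable_zeroBiasKernel : Measurable (Function.uncurry zeroBiasKernel) :=
  Measurable.ite (measurableSet_le measurable_const measurable_fst)
    (Measurable.ite (measurableSet_lt measurable_fst measurable_snd) measurable_snd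
      measurable_const)
    (Measurable.ite (measurableSet_lt measurable_snd measurable_fst) measurable_snd.neg
      measurable_const)

lemma zeroBiasKernel_of_nonneg {x : ℝ} (hx : 0 ≤ x) :
    (zeroBiasKernel · x) = (Ico 0 x).indicator fun _ => x := by
  ext w
  simp only [zeroBiasKernel, indicator_apply, mem_Ico]
  split_ifs <;> grind

lemma zeroBiasKernel_of_neg {x : ℝ} (hx : x < 0) :
    (zeroBiasKernel · x) = (Ioo x 0).indicator fun _ => -x := by
  ext w
  simp only [zeroBiasKernel, indicator_apply, mem_Ioo]
  split_ifs <;> grind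

lemma integrable_zeroBiasKernel (x : ℝ) : Integrable (zeroBiasKernel · x) := by
  rcases le_or_gt 0 x with hx | hx
  · rw [zeroBiasKernel_of_nonneg hx]
    exact (integrable_indicator_iff measurableSet_Ico).2 (integrableOn_const measure_Ico_lt_top.ne)
  · rw [zeroBiasKernel_of_neg hx]
    exact (integrable_indicator_iff measurableSet_Ioo).2 (integrableOn_const measure_Ioo_lt_top.ne)

lemma integral_zeroBiasKernel (x : ℝ) : ∫ w, zeroBiasKernel w x = x ^ 2 := by
  rcases le_or_gt 0 x with hx | hx
  · rw [zeroBiasKernel_of_nonneg hx, integral_indicator_const _ measurableSet_Ico,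
      Real.volume_real_Ico, max_eq_left (by linarith), smul_eq_mul]
    ring
  · rw [zeroBiasKernel_of_neg hx, integral_indicator_const _ measurableSet_Ioo,
      Real.volume_real_Ioo, max_eq_left (by linarith), smul_eq_mul]
    ring

section

variable {Ω : Type*} [MeasurableSpace Ω] {μ : Measure Ω} [SFinite μ] {X : Ω → ℝ}

lemma integrable_zeroBiasKernel_comp (hX : Measurable X)
    (hX2 : Integrable (fun ω => X ω ^ 2) μ) :
    Integrable (fun z : ℝ × Ω => zeroBiasKernel z.1 (X z.2)) (volume.prod μ) := by
  have hmeas : Measurable fun z : ℝ × Ω => zeroBiasKernel z.1 (X z.2) :=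
    measurable_zeroBiasKernel.comp (measurable_fst.prodMk (hX.comp measurable_snd))
  refine (integrable_prod_iff' hmeas.aestronglyMeasurable).2
    ⟨ae_of_all _ fun ω => integrable_zeroBiasKernel (X ω), hX2.congr (ae_of_all _ fun ω => ?_)⟩
  simp only [Real.norm_of_nonneg (zeroBiasKernel_nonneg _ _), integral_zeroBiasKernel]

lemma integral_integral_zeroBiasKernel (hX : Measurable X)
    (hX2 : Integrable (fun ω => X ω ^ 2) μ) :
    ∫ w, ∫ ω, zeroBiasKernel w (X ω) ∂μ = ∫ ω, X ω ^ 2 ∂μ := by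
  rw [integral_integral_swap (integrable_zeroBiasKernel_comp hX hX2)]
  simp only [integral_zeroBiasKernel]

end

theorem stmt0_general {Ω : Type*} [MeasureSpace Ω] [IsProbabilityMeasure (volume : Measure Ω)]
    (W : Ω → ℝ) (σ : ℝ) (hσ : 0 < σ)
    (hW : Measurable W)
    (hint : Integrable (fun ω => (W ω) ^ 2))
    (hvar : ∫ ω, (W ω) ^ 2 = σ ^ 2)
    (p : ℝ → ℝ)
    (hp : ∀ w : ℝ, p w =
      if 0 ≤ w then σ ^ (-2 : ℤ) * ∫ ω, W ω * Set.indicator {ω | w < W ω} 1 ω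
      else σ ^ (-2 : ℤ) * ∫ ω, (-W ω) * Set.indicator {ω | W ω < w} 1 ω) :
    (∀ w, 0 ≤ p w) ∧ ∫ w, p w = 1 := by
  have hp_eq (w : ℝ) : p w = σ ^ (-2 : ℤ) * ∫ ω, zeroBiasKernel w (W ω) := by
    rw [hp w]
    split_ifs with hw <;>
      simp [zeroBiasKernel, indicator_apply, hw, mul_ite]
  refine ⟨fun w => ?_, ?_⟩
  · rw [hp_eq]
    exact mul_nonneg (by positivity) (integral_nonneg fun ω => zeroBiasKernel_nonneg _ _)
  · simp_rw [hp_eq]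
    rw [integral_const_mul, integral_integral_zeroBiasKernel hW hint, hvar]
    field_simp

theorem stmt0 {Ω : Type*} [MeasureSpace Ω] [IsProbabilityMeasure (volume : Measure Ω)]
    (W : Ω → ℝ) (σ : ℝ) (hσ : 0 < σ)
    (hW : Measurable W)
    (hint : Integrable (fun ω => (W ω) ^ 2))
    (hmean : ∫ ω, W ω = 0)
    (hvar : ∫ ω, (W ω) ^ 2 = σ ^ 2)
    (p : ℝ → ℝ)
    (hp : ∀ w : ℝ, p w =
      if 0 ≤ w then σ ^ (-2 : ℤ) * ∫ ω, W ω * Set.indicator {ω | w < W ω} 1 ω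
      else σ ^ (-2 : ℤ) * ∫ ω, (-W ω) * Set.indicator {ω | W ω < w} 1 ω) :
    (∀ w, 0 ≤ p w) ∧ ∫ w, p w = 1 :=
  stmt0_general W σ hσ hW hint hvar p hp
end

section
/- Let a > b ≥ 0, c > 0 with ac ≥ 1, bc ≤ 1, and a(a−b) ≤ 1. Define Δ = (a+c)(b+c)(a−b), p = (1−bc)(b+c)/Δ, q = (ac−1)(a+c)/Δ, r = (1+ab)(a−b)/Δ. Then r/c − p·a³ − q·b³ ≤ 0. In fact r/c − pa³ − qb³ = −(a−b)(ac−1)(1−bc)(1+bc+ac+ab)/(Δc). -/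
theorem stmt6 (a b c : ℝ) (hab : b < a) (hb : 0 ≤ b) (hc : 0 < c)
    (hac : 1 ≤ a * c) (hbc : b * c ≤ 1) (haab : a * (a - b) ≤ 1) :
    let Δ := (a + c) * (b + c) * (a - b)
    let p := (1 - b * c) * (b + c) / Δ
    let q := (a * c - 1) * (a + c) / Δ
    let r := (1 + a * b) * (a - b) / Δ
    r / c - p * a ^ 3 - q * b ^ 3 ≤ 0 ∧
    r / c - p * a ^ 3 - q * b ^ 3 =
      -((a - b) * (a * c - 1) * (1 - b * c) * (1 + b * c + a * c + a * b)) / (Δ * c) := by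
  intro Δ p q r
  have ha : 0 < a := lt_of_lt_of_le (by positivity : (0:ℝ) < 1/c) (by rw [div_le_iff₀ hc]; linarith)
  have hΔ : 0 < Δ := by
    have : 0 < a - b := by linarith
    positivity
  have hne : Δ ≠ 0 := ne_of_gt hΔ
  have hcne : c ≠ 0 := ne_of_gt hc
  have heq : r / c - p * a ^ 3 - q * b ^ 3 =
      -((a - b) * (a * c - 1) * (1 - b * c) * (1 + b * c + a * c + a * b)) / (Δ * c) := by
    show (1 + a * b) * (a - b) / Δ / c - (1 - b * c) * (b + c) / Δ * a ^ 3
        - (a * c - 1) * (a + c) / Δ * b ^ 3 = _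
    field_simp
    ring
  refine ⟨?_, heq⟩
  rw [heq]
  apply div_nonpos_of_nonpos_of_nonneg
  · have h1 : 0 ≤ a - b := by linarith
    have h2 : 0 ≤ a * c - 1 := by linarith
    have h3 : 0 ≤ 1 - b * c := by linarith
    have h4 : 0 ≤ 1 + b * c + a * c + a * b := by nlinarith
    nlinarith [mul_nonneg (mul_nonneg (mul_nonneg h1 h2) h3) h4]
  · positivity
end

section
/- Let a > b ≥ 0, c > 0 with ac ≥ 1 and c(b+c) ≤ 1. Define Δ = (a+c)(b+c)(a−b), p = (1−bc)(b+c)/Δ, r = (1+ab)(a−b)/Δ. Then p/a − r·c³ ≤ 0. -/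
theorem stmt7 (a b c : ℝ) (hab : b < a) (hb : 0 ≤ b) (hc : 0 < c)
    (hac : 1 ≤ a * c) (hcbc : c * (b + c) ≤ 1) :
    let Δ := (a + c) * (b + c) * (a - b)
    let p := (1 - b * c) * (b + c) / Δ
    let r := (1 + a * b) * (a - b) / Δ
    p / a - r * c ^ 3 ≤ 0 := by
  intro Δ p r
  have ha : 0 < a := by nlinarith
  have hΔ : 0 < Δ := by
    have : 0 < a + c := by linarith
    have : 0 < b + c := by linarith
    have : 0 < a - b := by linarith
    positivity
  have key : p / a - r * c ^ 3 =
      ((1 - b * c) * (b + c) - a * (1 + a * b) * (a - b) * c ^ 3) / (Δ * a) := by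
    simp only [p, r]
    field_simp
  rw [key]
  apply div_nonpos_of_nonpos_of_nonneg _ (by positivity)
  have hnum : (1 - b * c) * (b + c) - a * (1 + a * b) * (a - b) * c ^ 3 =
      (a * c - 1) * (-((a * b + 1) * (a - b) * c ^ 2) - (1 + b * (a - b)) * c - b) := by
    ring
  rw [hnum]
  have h1 : 0 ≤ a * c - 1 := by linarith
  have h2 : -((a * b + 1) * (a - b) * c ^ 2) - (1 + b * (a - b)) * c - b ≤ 0 := by
    have t1 : 0 ≤ (a * b + 1) * (a - b) * c ^ 2 := by
      have : (0:ℝ) ≤ a * b := mul_nonneg ha.le hb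
      have : (0:ℝ) ≤ a - b := by linarith
      positivity
    have t2 : 0 ≤ (1 + b * (a - b)) * c := by
      have : (0:ℝ) ≤ b * (a - b) := mul_nonneg hb (by linarith)
      positivity
    linarith
  exact mul_nonpos_of_nonneg_of_nonpos h1 h2
end

section
/- Let a > b ≥ 0, c > 0 with a(a−b) ≥ 1, c(b+c) ≥ 1, and bc ≤ 1. Define Δ = (a+c)(b+c)(a−b), p = (1−bc)(b+c)/Δ, q = (ac−1)(a+c)/Δ, r = (1+ab)(a−b)/Δ. Then p·a·(a − b − 1/a)² + r/c − p·a³ − q·b³ ≤ 0. -/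
/-! Clearing the denominator `Δ a c` writes the expression as `(1 - b c) / (Δ a c)` times the
quadratic `(1 - 2A) c² + b (1 - A) c + A` in `c`, where `A = a (a - b) (1 + a b)`. The prefactor
is nonnegative since `b c ≤ 1`. The quadratic is nonpositive: `a (a - b) ≥ 1` and `a c ≥ 1` give
`A c ≥ (1 + a b) c ≥ b + c`, and then `c² + b c ≤ A (2c² + b c - 1)` reduces to
`(b + c) (c (b + c) - 1) ≥ 0`. -/

lemma one_le_mul_of_one_le_mul_sub_of_one_le_mul_add {a b c : ℝ} (ha : 0 < a) (hc : 0 < c)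
    (haab : 1 ≤ a * (a - b)) (hcbc : 1 ≤ c * (b + c)) : 1 ≤ a * c := by
  by_contra! hac
  have hbc : 0 < b + c := pos_of_mul_pos_right (by linarith) hc.le
  -- `a² c (b + c) = a c (a b + a c) < a b + 1 ≤ a²`
  have : a ^ 2 * (c * (b + c)) < a ^ 2 := by
    nlinarith [mul_pos ha hbc, mul_lt_mul_of_pos_right hac (mul_pos ha hbc)]
  nlinarith [sq_pos_of_pos ha]

lemma add_le_mul_sub_mul_one_add_mul_mul {a b c : ℝ} (ha : 0 < a) (hb : 0 ≤ b) (hc : 0 ≤ c)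
    (haab : 1 ≤ a * (a - b)) (hac : 1 ≤ a * c) : b + c ≤ a * (a - b) * (1 + a * b) * c := by
  have hab : 0 ≤ 1 + a * b := by positivity
  calc b + c ≤ (1 + a * b) * c := by nlinarith
    _ ≤ a * (a - b) * (1 + a * b) * c := by
      gcongr
      exact le_mul_of_one_le_left hab haab

lemma quadratic_nonpos_of_add_le_mul {A b c : ℝ} (hc : 0 < c) (hcbc : 1 ≤ c * (b + c))
    (hA : b + c ≤ A * c) : (1 - 2 * A) * c ^ 2 + b * (1 - A) * c + A ≤ 0 := by
  have hbc : 0 < b + c := pos_of_mul_pos_right (by linarith) hc.le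
  have h2 : 0 ≤ 2 * c ^ 2 + b * c - 1 := by nlinarith
  suffices c * ((1 - 2 * A) * c ^ 2 + b * (1 - A) * c + A) ≤ 0 from
    nonpos_of_mul_nonpos_right this hc
  nlinarith [mul_le_mul_of_nonneg_right hA h2, mul_nonneg hbc.le (sub_nonneg.2 hcbc)]

lemma caseB_expr_eq {a b c : ℝ} (ha : a ≠ 0) (hc : c ≠ 0) (hac : a + c ≠ 0) (hbc : b + c ≠ 0)
    (hab : a - b ≠ 0) :
    (1 - b * c) * (b + c) / ((a + c) * (b + c) * (a - b)) * a * (a - b - 1 / a) ^ 2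
        + (1 + a * b) * (a - b) / ((a + c) * (b + c) * (a - b)) / c
        - (1 - b * c) * (b + c) / ((a + c) * (b + c) * (a - b)) * a ^ 3
        - (a * c - 1) * (a + c) / ((a + c) * (b + c) * (a - b)) * b ^ 3
      = (1 - b * c) / ((a + c) * (b + c) * (a - b) * (a * c))
        * ((1 - 2 * (a * (a - b) * (1 + a * b))) * c ^ 2
          + b * (1 - a * (a - b) * (1 + a * b)) * c + a * (a - b) * (1 + a * b)) := by
  field_simp
  ring

theorem stmt8 (a b c : ℝ) (hab : b < a) (hb : 0 ≤ b) (hc : 0 < c)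
    (haab : 1 ≤ a * (a - b)) (hcbc : 1 ≤ c * (b + c)) (hbc : b * c ≤ 1) :
    let Δ := (a + c) * (b + c) * (a - b)
    let p := (1 - b * c) * (b + c) / Δ
    let q := (a * c - 1) * (a + c) / Δ
    let r := (1 + a * b) * (a - b) / Δ
    p * a * (a - b - 1 / a) ^ 2 + r / c - p * a ^ 3 - q * b ^ 3 ≤ 0 := by
  intro Δ p q r
  have ha : 0 < a := hb.trans_lt hab
  have hab' : 0 < a - b := sub_pos.2 hab
  have hac := one_le_mul_of_one_le_mul_sub_of_one_le_mul_add ha hc haab hcbc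
  have hΔ : 0 < (a + c) * (b + c) * (a - b) * (a * c) := by positivity
  rw [caseB_expr_eq ha.ne' hc.ne' (by positivity) (by positivity) hab'.ne']
  exact mul_nonpos_of_nonneg_of_nonpos (div_nonneg (sub_nonneg.2 hbc) hΔ.le)
    (quadratic_nonpos_of_add_le_mul hc hcbc
      (add_le_mul_sub_mul_one_add_mul_mul ha hb hc.le haab hac))
end

section
/- Let h₁, ..., h_m : S → ℝ be functions on a set S, and let K denote the set of finitely-supported probability measures μ on S with ∫ hᵢ dμ = 0 for i = 1,...,m. Let K_j ⊆ K be those measures supported on at most j points. Then for any quasiconvex function g : K → ℝ, sup_{μ ∈ K} g(μ) = sup_{μ ∈ K_{m+1}} g(μ) (with sup over the empty set interpreted as 0). -/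
/-!
If `μ ∈ K` has more than `m + 1` atoms, the `m + 1` linear functionals "total mass" and
`∫ hᵢ dμ`, restricted to signed measures carried by the support of `μ`, have a nonzero kernel
vector `τ`. Having total mass `0`, `τ` takes both signs, so moving from `μ` along `τ` and along
`-τ` until an atom vanishes writes `μ` as a proper convex combination of two elements of `K`
with fewer atoms. Quasiconvexity bounds `g μ` by the larger of their values, and induction on the
number of atoms ends in `K_{m+1}`.
-/

open Finset Module

lemma Finsupp.exists_ne_zero_support_subset_map_eq_zero {S V : Type*} [AddCommGroup V]
    [Module ℝ V] [FiniteDimensional ℝ V] (L : (S →₀ ℝ) →ₗ[ℝ] V) (s : Finset S)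
    (hs : finrank ℝ V < #s) : ∃ τ : S →₀ ℝ, τ ≠ 0 ∧ τ.support ⊆ s ∧ L τ = 0 := by
  let e := Finsupp.supportedEquivFinsupp (M := ℝ) (R := ℝ) (s : Set S)
  have : FiniteDimensional ℝ (Finsupp.supported ℝ ℝ (s : Set S)) := e.symm.finiteDimensional
  let f : Finsupp.supported ℝ ℝ (s : Set S) →ₗ[ℝ] V := L ∘ₗ (Finsupp.supported ℝ ℝ _).subtype
  obtain ⟨τ, hτ, hτ0⟩ := Submodule.exists_mem_ne_zero_of_ne_bot
    (LinearMap.ker_ne_bot_of_finrank_lt (V := Finsupp.supported ℝ ℝ (s : Set S)) (f := f)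
      (by simpa [e.finrank_eq] using hs))
  exact ⟨τ, by simpa using hτ0, by exact_mod_cast (Finsupp.mem_supported ℝ _).1 τ.2, hτ⟩

lemma Finsupp.exists_neg_of_sum_eq_zero {S : Type*} {τ : S →₀ ℝ} (hτ : τ ≠ 0)
    (hsum : (τ.sum fun _ p => p) = 0) : ∃ s, τ s < 0 := by
  by_contra! hnonneg
  exact hτ (Finsupp.ext fun s => by
    by_cases hs : s ∈ τ.support
    · exact (Finset.sum_eq_zero_iff_of_nonneg (fun s _ => hnonneg s)).1 hsum s hs
    · exact Finsupp.notMem_support_iff.1 hs)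

lemma Finsupp.exists_pos_add_smul_support_ssubset {S : Type*} {μ τ : S →₀ ℝ}
    (hμ : ∀ s, 0 ≤ μ s) (hτ : τ.support ⊆ μ.support) {s₀ : S} (hs₀ : τ s₀ < 0) :
    ∃ t : ℝ, 0 < t ∧ (∀ s, 0 ≤ (μ + t • τ) s) ∧ (μ + t • τ).support ⊂ μ.support := by
  classical
  have hsupp {s} (hs : τ s < 0) : s ∈ μ.support := hτ (Finsupp.mem_support_iff.2 hs.ne)
  obtain ⟨s₁, hs₁, hmin⟩ := (μ.support.filter (τ · < 0)).exists_min_image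
    (fun s => μ s / -τ s) ⟨s₀, mem_filter.2 ⟨hsupp hs₀, hs₀⟩⟩
  rw [mem_filter] at hs₁
  -- the largest step keeping `μ + t • τ` nonnegative; it kills the atom `s₁`
  set t := μ s₁ / -τ s₁
  have ht : 0 < t := div_pos ((hμ s₁).lt_of_ne' (Finsupp.mem_support_iff.1 hs₁.1))
    (neg_pos.2 hs₁.2)
  have hts₁ : t * -τ s₁ = μ s₁ := div_mul_cancel₀ _ (neg_pos.2 hs₁.2).ne'
  refine ⟨t, ht, fun s => ?_, (Finset.ssubset_iff_of_subset ?_).2 ⟨s₁, hs₁.1, ?_⟩⟩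
  · simp only [Finsupp.add_apply, Finsupp.smul_apply, smul_eq_mul]
    rcases le_or_gt 0 (τ s) with hs | hs
    · nlinarith [hμ s]
    · have := (le_div_iff₀ (neg_pos.2 hs)).1 (hmin s (mem_filter.2 ⟨hsupp hs, hs⟩))
      linarith
  · exact Finsupp.support_add.trans (union_subset subset_rfl (Finsupp.support_smul.trans hτ))
  · simp only [Finsupp.mem_support_iff, Finsupp.add_apply, Finsupp.smul_apply, smul_eq_mul,
      not_not]
    linarith

lemma Finsupp.exists_split_of_finrank_lt {S V : Type*} [AddCommGroup V] [Module ℝ V]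
    [FiniteDimensional ℝ V] (L : (S →₀ ℝ) →ₗ[ℝ] V)
    (hL : ∀ τ, L τ = 0 → (τ.sum fun _ p => p) = 0) {μ : S →₀ ℝ} (hμ : ∀ s, 0 ≤ μ s)
    (hcard : finrank ℝ V < #μ.support) :
    ∃ ν₁ ν₂ : S →₀ ℝ, ∃ α ∈ Set.Ioo (0 : ℝ) 1, μ = α • ν₁ + (1 - α) • ν₂ ∧
      ∀ ν ∈ ({ν₁, ν₂} : Set (S →₀ ℝ)),
        (∀ s, 0 ≤ ν s) ∧ L ν = L μ ∧ #ν.support < #μ.support := by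
  obtain ⟨τ, hτ0, hτμ, hτL⟩ := exists_ne_zero_support_subset_map_eq_zero L _ hcard
  have hnegL : L (-τ) = 0 := by rw [map_neg, hτL, neg_zero]
  obtain ⟨s₁, hs₁⟩ := exists_neg_of_sum_eq_zero hτ0 (hL τ hτL)
  obtain ⟨s₂, hs₂⟩ := exists_neg_of_sum_eq_zero (neg_ne_zero.2 hτ0) (hL _ hnegL)
  obtain ⟨t₁, ht₁, hnonneg₁, hssub₁⟩ := exists_pos_add_smul_support_ssubset hμ hτμ hs₁
  obtain ⟨t₂, ht₂, hnonneg₂, hssub₂⟩ :=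
    exists_pos_add_smul_support_ssubset hμ (by rwa [support_neg]) hs₂
  have hα : (1 - t₂ / (t₁ + t₂)) * t₂ = t₂ / (t₁ + t₂) * t₁ := by
    field_simp
    ring
  refine ⟨μ + t₁ • τ, μ + t₂ • -τ, t₂ / (t₁ + t₂),
    ⟨by positivity, (div_lt_one (by positivity)).2 (by linarith)⟩,
    by linear_combination (norm := module) hα • τ, ?_⟩
  rintro ν (rfl | rfl)
  · exact ⟨hnonneg₁, by simp [hτL], card_lt_card hssub₁⟩
  · exact ⟨hnonneg₂, by simp [hτL], card_lt_card hssub₂⟩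

theorem iSup_eq_iSup_of_exists_split {E β : Type*} [AddCommGroup E] [Module ℝ E]
    [CompleteLinearOrder β] {K : Set E} {g : E → β} (size : E → ℕ) (n : ℕ)
    (hg : ∀ μ ∈ K, ∀ ν ∈ K, ∀ α ∈ Set.Ioo (0 : ℝ) 1, g (α • μ + (1 - α) • ν) ≤ max (g μ) (g ν))
    (hsplit : ∀ μ ∈ K, n < size μ → ∃ ν₁ ∈ K, ∃ ν₂ ∈ K, ∃ α ∈ Set.Ioo (0 : ℝ) 1,
      size ν₁ < size μ ∧ size ν₂ < size μ ∧ μ = α • ν₁ + (1 - α) • ν₂) :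
    ⨆ μ ∈ K, g μ = ⨆ μ ∈ {μ ∈ K | size μ ≤ n}, g μ := by
  refine le_antisymm (iSup₂_le fun μ hμ => ?_) (biSup_mono fun μ hμ => hμ.1)
  induction hk : size μ using Nat.strong_induction_on generalizing μ with
  | _ k ih =>
    by_cases hkn : k ≤ n
    · exact le_biSup g ⟨hμ, hk ▸ hkn⟩
    obtain ⟨ν₁, hν₁, ν₂, hν₂, α, hα, h₁, h₂, rfl⟩ := hsplit μ hμ (by omega)
    exact (hg _ hν₁ _ hν₂ α hα).trans
      (max_le (ih _ (hk ▸ h₁) ν₁ hν₁ rfl) (ih _ (hk ▸ h₂) ν₂ hν₂ rfl))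

theorem stmt12 {S : Type*} (m : ℕ) (h : Fin m → S → ℝ)
    (K : Set (S →₀ ℝ))
    (hK : K = {μ | (∀ s, 0 ≤ μ s) ∧ (μ.sum fun _ p => p) = 1 ∧
      ∀ i : Fin m, (μ.sum fun s p => p * h i s) = 0})
    (Kj : ℕ → Set (S →₀ ℝ))
    (hKj : ∀ j, Kj j = {μ ∈ K | μ.support.card ≤ j})
    (g : (S →₀ ℝ) → ℝ)
    (hg : ∀ μ ∈ K, ∀ ν ∈ K, ∀ α : ℝ, α ∈ Set.Ioo (0 : ℝ) 1 →
      g (α • μ + (1 - α) • ν) ≤ max (g μ) (g ν)) :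
    (⨆ μ ∈ K, (g μ : EReal)) = ⨆ μ ∈ Kj (m + 1), (g μ : EReal) := by
  let L : (S →₀ ℝ) →ₗ[ℝ] ℝ × (Fin m → ℝ) := (Finsupp.lsum ℝ fun _ => LinearMap.id).prod
    (LinearMap.pi fun i => Finsupp.linearCombination ℝ (h i))
  have hKL : K = {μ | (∀ s, 0 ≤ μ s) ∧ L μ = (1, 0)} := by
    simp only [hK, L, LinearMap.prod_apply, Finsupp.coe_lsum, LinearMap.id_coe, Function.prod_apply,
      Prod.mk.injEq, funext_iff, LinearMap.pi_apply, Finsupp.linearCombination_apply, smul_eq_mul,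
      Pi.zero_apply]
    rfl
  have hgE : ∀ μ ∈ K, ∀ ν ∈ K, ∀ α ∈ Set.Ioo (0 : ℝ) 1,
      (g (α • μ + (1 - α) • ν) : EReal) ≤ max (g μ : EReal) (g ν) := fun μ hμ ν hν α hα =>
    (EReal.coe_le_coe_iff.2 (hg μ hμ ν hν α hα)).trans_eq EReal.coe_strictMono.monotone.map_max
  rw [hKj]
  refine iSup_eq_iSup_of_exists_split (g := fun μ => (g μ : EReal)) (fun μ => #μ.support) (m + 1)
    hgE fun μ hμ hcard => ?_
  rw [hKL] at hμ ⊢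
  obtain ⟨ν₁, ν₂, α, hα, rfl, hν⟩ := Finsupp.exists_split_of_finrank_lt L
    (fun τ hτ => congr_arg Prod.fst hτ) hμ.1 (by simpa [add_comm] using hcard)
  obtain ⟨hν₁, hν₁L, hν₁card⟩ := hν ν₁ (by simp)
  obtain ⟨hν₂, hν₂L, hν₂card⟩ := hν ν₂ (by simp)
  exact ⟨ν₁, ⟨hν₁, hν₁L.trans hμ.2⟩, ν₂, ⟨hν₂, hν₂L.trans hμ.2⟩, α, hα, hν₁card, hν₂card, rfl⟩
end

section
/- Define a := max_{x>0} (cos x − 1 + x²/2)/x³ (numerically ≈ 0.099162). Then cos x − 1 + x²/2 ≤ a·|x|³ for all x ∈ ℝ, and a < 1/6. -/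
lemma aux_sin_ge (x : ℝ) (hx : 0 ≤ x) : x - x ^ 3 / 6 ≤ Real.sin x := by
  have mono : MonotoneOn (fun t : ℝ => Real.sin t - (t - t ^ 3 / 6)) (Set.Ici 0) := by
    apply monotoneOn_of_deriv_nonneg (convex_Ici 0)
    · fun_prop
    · intro y hy
      exact (((Real.hasDerivAt_sin y).sub
        ((hasDerivAt_id y).sub (((hasDerivAt_pow 3 y).div_const 6)))).differentiableAt).differentiableWithinAt
    · intro y hy
      have h : HasDerivAt (fun t : ℝ => Real.sin t - (t - t ^ 3 / 6))
          (Real.cos y - (1 - (3 : ℕ) * y ^ (3 - 1) / 6)) y :=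
        (Real.hasDerivAt_sin y).sub ((hasDerivAt_id y).sub ((hasDerivAt_pow 3 y).div_const 6))
      rw [h.deriv]
      have := Real.one_sub_sq_div_two_le_cos (x := y)
      norm_num
      nlinarith [this]
  have h0 : (fun t : ℝ => Real.sin t - (t - t ^ 3 / 6)) 0 ≤
      (fun t : ℝ => Real.sin t - (t - t ^ 3 / 6)) x :=
    mono (Set.self_mem_Ici) hx (by exact hx)
  simp at h0
  linarith

lemma aux_cos_le (x : ℝ) (hx : 0 ≤ x) : Real.cos x ≤ 1 - x ^ 2 / 2 + x ^ 4 / 24 := by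
  have mono : MonotoneOn (fun t : ℝ => (1 - t ^ 2 / 2 + t ^ 4 / 24) - Real.cos t) (Set.Ici 0) := by
    apply monotoneOn_of_deriv_nonneg (convex_Ici 0)
    · fun_prop
    · intro y hy
      exact ((((hasDerivAt_const y (1:ℝ)).sub ((hasDerivAt_pow 2 y).div_const 2)).add
        ((hasDerivAt_pow 4 y).div_const 24)).sub (Real.hasDerivAt_cos y)).differentiableAt.differentiableWithinAt
    · intro y hy
      have h : HasDerivAt (fun t : ℝ => (1 - t ^ 2 / 2 + t ^ 4 / 24) - Real.cos t)
          (((0 : ℝ) - (2:ℕ) * y ^ (2-1) / 2 + (4:ℕ) * y ^ (4-1) / 24) - (-Real.sin y)) y :=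
        (((hasDerivAt_const y (1:ℝ)).sub ((hasDerivAt_pow 2 y).div_const 2)).add
          ((hasDerivAt_pow 4 y).div_const 24)).sub (Real.hasDerivAt_cos y)
      rw [h.deriv]
      have hy0 : (0:ℝ) ≤ y := le_of_lt (by simpa using hy)
      have := aux_sin_ge y hy0
      norm_num
      nlinarith [this]
  have h0 : (fun t : ℝ => (1 - t ^ 2 / 2 + t ^ 4 / 24) - Real.cos t) 0 ≤
      (fun t : ℝ => (1 - t ^ 2 / 2 + t ^ 4 / 24) - Real.cos t) x :=
    mono (Set.self_mem_Ici) hx hx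
  simp at h0
  linarith

theorem stmt17 (a : ℝ)
    (ha : IsGreatest
      {y : ℝ | ∃ x : ℝ, 0 < x ∧ y = (Real.cos x - 1 + x ^ 2 / 2) / x ^ 3} a) :
    (∀ x : ℝ, Real.cos x - 1 + x ^ 2 / 2 ≤ a * |x| ^ 3) ∧ a < 1 / 6 := by
  obtain ⟨⟨M, hM, haM⟩, hub⟩ := ha
  have key : ∀ x : ℝ, 0 < x → Real.cos x - 1 + x ^ 2 / 2 ≤ a * x ^ 3 := by
    intro x hx
    have hx3 : (0:ℝ) < x ^ 3 := by positivity
    have hmem : (Real.cos x - 1 + x ^ 2 / 2) / x ^ 3 ≤ a :=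
      hub ⟨x, hx, rfl⟩
    calc Real.cos x - 1 + x ^ 2 / 2 = ((Real.cos x - 1 + x ^ 2 / 2) / x ^ 3) * x ^ 3 := by
          rw [div_mul_cancel₀ _ (by positivity : (x:ℝ)^3 ≠ 0)]
      _ ≤ a * x ^ 3 := by exact mul_le_mul_of_nonneg_right hmem hx3.le
  constructor
  · intro x
    rcases lt_trichotomy x 0 with h | h | h
    · have := key (-x) (by linarith)
      rw [Real.cos_neg] at this
      rw [abs_of_neg h]
      calc Real.cos x - 1 + x ^ 2 / 2 = Real.cos x - 1 + (-x) ^ 2 / 2 := by ring_nf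
        _ ≤ a * (-x) ^ 3 := this
        _ = a * (-x) ^ 3 := rfl
    · simp [h]
    · have := key x h
      rwa [abs_of_pos h]
  · rcases le_or_gt M 3 with hM3 | hM3
    · have hcos := aux_cos_le M hM.le
      have hM3' : (0:ℝ) < M ^ 3 := by positivity
      have : a ≤ M / 24 := by
        rw [haM, div_le_iff₀ hM3']
        nlinarith
      linarith
    · have hcos := Real.cos_le_one M
      have hM3' : (0:ℝ) < M ^ 3 := by positivity
      have : a ≤ 1 / (2 * M) := by
        rw [haM, div_le_div_iff₀ hM3' (by linarith)]
        nlinarith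
      have : 1 / (2 * M) < 1 / 6 := by
        rw [div_lt_div_iff₀ (by linarith) (by norm_num)]
        linarith
      linarith
end

section
/- Define b(t, γ) for γ > 0 and t ∈ ℝ by: b(t,γ) = −t² + 2γa|t|³ if γ|t| < M; b(t,γ) = −2γ^{−2}(1 − cos(γt)) if M ≤ γ|t| ≤ 2π; b(t,γ) = 0 if γ|t| > 2π, where a = max_{x>0}(cos x − 1 + x²/2)/x³ and M is the maximizer. Then for each fixed t ∈ ℝ, the function γ ↦ b(t, γ) is nondecreasing on (0, ∞). -/
open Real

lemma sinc_anti18 {u v : ℝ} (hu : 0 < u) (huv : u ≤ v) (hv : v ≤ Real.pi) :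
    u * Real.sin v ≤ v * Real.sin u := by
  have hv0 : 0 < v := lt_of_lt_of_le hu huv
  have hc := strictConcaveOn_sin_Icc.concaveOn
  have h := hc.2 (Set.mem_Icc.2 ⟨hv0.le, hv⟩) (Set.mem_Icc.2 ⟨le_rfl, Real.pi_pos.le⟩)
    (show (0:ℝ) ≤ u / v by positivity)
    (show (0:ℝ) ≤ 1 - u / v by
      have : u / v ≤ 1 := (div_le_one hv0).2 huv; linarith)
    (by ring)
  simp only [smul_eq_mul, mul_zero, add_zero, Real.sin_zero] at h
  rw [div_mul_cancel₀ _ hv0.ne'] at h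
  have h' : (u / v) * Real.sin v ≤ Real.sin u := by linarith
  calc u * Real.sin v = v * ((u / v) * Real.sin v) := by field_simp
    _ ≤ v * Real.sin u := mul_le_mul_of_nonneg_left h' hv0.le

lemma cos_ratio18 {x y : ℝ} (hx : 0 < x) (hxy : x ≤ y) (hy : y ≤ 2 * Real.pi) :
    x ^ 2 * (1 - Real.cos y) ≤ y ^ 2 * (1 - Real.cos x) := by
  have hu : 0 < x / 2 := by linarith
  have huv : x / 2 ≤ y / 2 := by linarith
  have hvpi : y / 2 ≤ Real.pi := by linarith
  have h := sinc_anti18 hu huv hvpi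
  have hsu : 0 ≤ Real.sin (x / 2) :=
    Real.sin_nonneg_of_nonneg_of_le_pi hu.le (le_trans huv hvpi)
  have hsv : 0 ≤ Real.sin (y / 2) :=
    Real.sin_nonneg_of_nonneg_of_le_pi (by linarith) hvpi
  have hcx : 1 - Real.cos x = 2 * Real.sin (x / 2) ^ 2 := by
    have h1 := Real.cos_two_mul (x / 2)
    have h2 := Real.sin_sq_add_cos_sq (x / 2)
    have h3 : (2 : ℝ) * (x / 2) = x := by ring
    rw [h3] at h1
    nlinarith
  have hcy : 1 - Real.cos y = 2 * Real.sin (y / 2) ^ 2 := by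
    have h1 := Real.cos_two_mul (y / 2)
    have h2 := Real.sin_sq_add_cos_sq (y / 2)
    have h3 : (2 : ℝ) * (y / 2) = y := by ring
    rw [h3] at h1
    nlinarith
  have hsq : (x / 2 * Real.sin (y / 2)) ^ 2 ≤ (y / 2 * Real.sin (x / 2)) ^ 2 := by
    have h0 : 0 ≤ x / 2 * Real.sin (y / 2) := by positivity
    nlinarith
  rw [hcx, hcy]
  nlinarith [hsq]

set_option maxHeartbeats 2000000 in
theorem stmt18 (a M : ℝ)
    (ha : IsGreatest
      {y : ℝ | ∃ x : ℝ, 0 < x ∧ y = (Real.cos x - 1 + x ^ 2 / 2) / x ^ 3} a)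
    (hM : 0 < M ∧ (Real.cos M - 1 + M ^ 2 / 2) / M ^ 3 = a)
    (b : ℝ → ℝ → ℝ)
    (hb : ∀ t γ : ℝ, b t γ =
      if γ * |t| < M then -t ^ 2 + 2 * γ * a * |t| ^ 3
      else if γ * |t| ≤ 2 * Real.pi then -2 * (1 / γ) ^ 2 * (1 - Real.cos (γ * t))
      else 0) :
    ∀ t : ℝ, MonotoneOn (fun γ => b t γ) (Set.Ioi (0 : ℝ)) := by
  obtain ⟨hM0, hMa⟩ := hM
  have hpi := Real.pi_gt_three
  have hpi3 : 0 < Real.pi ^ 3 := by positivity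
  have hapi : (Real.cos Real.pi - 1 + Real.pi ^ 2 / 2) / Real.pi ^ 3 ≤ a :=
    ha.2 ⟨Real.pi, Real.pi_pos, rfl⟩
  have hapi' : (Real.pi ^ 2 / 2 - 2) ≤ a * Real.pi ^ 3 := by
    rw [Real.cos_pi, div_le_iff₀ hpi3] at hapi
    linarith
  have ha0 : 0 < a := by
    by_contra h
    push_neg at h
    nlinarith [mul_nonneg (neg_nonneg.2 h) hpi3.le, sq_nonneg (Real.pi - 3)]
  have hid : a * M ^ 3 = Real.cos M - 1 + M ^ 2 / 2 := by
    field_simp at hMa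
    linarith
  have hcosM : Real.cos M ≤ 1 := Real.cos_le_one M
  have haM1 : 2 * a * M ≤ 1 := by
    have h2 : 2 * a * M * M ^ 2 ≤ 1 * M ^ 2 := by nlinarith
    exact le_of_mul_le_mul_right h2 (by positivity)
  have hM2pi : M < 2 * Real.pi := by
    by_contra hcon
    push_neg at hcon
    have t1 : 0 ≤ a * (M - 2 * Real.pi) := mul_nonneg ha0.le (by linarith)
    have t2 : 4 * a * Real.pi ≤ 1 := by nlinarith [haM1]
    have t3 := mul_le_mul_of_nonneg_right t2 (sq_nonneg Real.pi)
    nlinarith [hapi', t3, sq_nonneg (Real.pi - 3)]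
  intro t γ₁ hγ₁ γ₂ hγ₂ hle
  simp only [Set.mem_Ioi] at hγ₁ hγ₂
  simp only
  rw [hb, hb]
  set s := |t| with hs
  have hs0 : 0 ≤ s := abs_nonneg t
  have hts : t ^ 2 = s ^ 2 := (sq_abs t).symm
  have hxle : γ₁ * s ≤ γ₂ * s := mul_le_mul_of_nonneg_right hle hs0
  have hcos : ∀ γ : ℝ, 0 < γ → Real.cos (γ * t) = Real.cos (γ * s) := by
    intro γ hγ
    rw [← Real.cos_abs (γ * t), abs_mul, abs_of_pos hγ]
  have key2 : ∀ γ : ℝ, 0 < γ → 0 < s → M ≤ γ * s → γ * s ≤ 2 * Real.pi →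
      -s ^ 2 + 2 * a * M * s ^ 2 ≤ -2 * (1 / γ) ^ 2 * (1 - Real.cos (γ * s)) := by
    intro γ hγ hspos h1 h2
    have key := cos_ratio18 hM0 h1 h2
    have h3 : (-s ^ 2 + 2 * a * M * s ^ 2) * (γ ^ 2 * M ^ 2) ≤
        (-2 * (1 / γ) ^ 2 * (1 - Real.cos (γ * s))) * (γ ^ 2 * M ^ 2) := by
      have e : (-2 * (1 / γ) ^ 2 * (1 - Real.cos (γ * s))) * (γ ^ 2 * M ^ 2) =
          -2 * M ^ 2 * (1 - Real.cos (γ * s)) := by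
        field_simp
      rw [e]
      nlinarith [key, mul_le_mul_of_nonneg_right (le_of_eq hid)
        (mul_nonneg (sq_nonneg γ) (sq_nonneg s))]
    exact le_of_mul_le_mul_right h3 (by positivity)
  split_ifs with h1 h2 h3 h4 h5 h6 h7 h8
  · -- both region 1
    nlinarith [mul_le_mul_of_nonneg_right hle (mul_nonneg ha0.le (pow_nonneg hs0 3))]
  · -- γ₁ region 1, γ₂ region 2
    have hM2 : M ≤ γ₂ * s := not_lt.1 h2
    have hspos : 0 < s := by
      rcases hs0.lt_or_eq with h | h
      · exact h
      · exfalso; rw [← h] at hM2; simp at hM2; linarith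
    have step1 : -t ^ 2 + 2 * γ₁ * a * s ^ 3 ≤ -s ^ 2 + 2 * a * M * s ^ 2 := by
      rw [hts]
      nlinarith [mul_le_mul_of_nonneg_right h1.le
        (mul_nonneg (mul_nonneg (by norm_num : (0:ℝ) ≤ 2) ha0.le) (sq_nonneg s))]
    calc -t ^ 2 + 2 * γ₁ * a * s ^ 3 ≤ -s ^ 2 + 2 * a * M * s ^ 2 := step1
      _ ≤ -2 * (1 / γ₂) ^ 2 * (1 - Real.cos (γ₂ * s)) := key2 γ₂ hγ₂ hspos hM2 h3
      _ = -2 * (1 / γ₂) ^ 2 * (1 - Real.cos (γ₂ * t)) := by rw [hcos γ₂ hγ₂]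
  · -- γ₁ region 1, γ₂ region 3
    rw [hts]
    nlinarith [mul_le_mul_of_nonneg_right h1.le
      (mul_nonneg (mul_nonneg (by norm_num : (0:ℝ) ≤ 2) ha0.le) (sq_nonneg s))]
  · -- impossible
    exact absurd (lt_of_le_of_lt hxle h5) h1
  · -- both region 2
    have hM1 : M ≤ γ₁ * s := not_lt.1 h1
    have hspos : 0 < s := by
      rcases hs0.lt_or_eq with h | h
      · exact h
      · exfalso; rw [← h] at hM1; simp at hM1; linarith
    have hx1 : 0 < γ₁ * s := lt_of_lt_of_le hM0 hM1
    have key := cos_ratio18 hx1 hxle h6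
    rw [hcos γ₁ hγ₁, hcos γ₂ hγ₂]
    have h9 : (-2 * (1 / γ₁) ^ 2 * (1 - Real.cos (γ₁ * s))) * (γ₁ ^ 2 * γ₂ ^ 2 * s ^ 2) ≤
        (-2 * (1 / γ₂) ^ 2 * (1 - Real.cos (γ₂ * s))) * (γ₁ ^ 2 * γ₂ ^ 2 * s ^ 2) := by
      have e1 : (-2 * (1 / γ₁) ^ 2 * (1 - Real.cos (γ₁ * s))) * (γ₁ ^ 2 * γ₂ ^ 2 * s ^ 2) =
          -2 * (γ₂ ^ 2 * s ^ 2) * (1 - Real.cos (γ₁ * s)) := by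
        field_simp
      have e2 : (-2 * (1 / γ₂) ^ 2 * (1 - Real.cos (γ₂ * s))) * (γ₁ ^ 2 * γ₂ ^ 2 * s ^ 2) =
          -2 * (γ₁ ^ 2 * s ^ 2) * (1 - Real.cos (γ₂ * s)) := by
        field_simp
      rw [e1, e2]
      nlinarith [key]
    exact le_of_mul_le_mul_right h9 (by positivity)
  · -- γ₁ region 2, γ₂ region 3
    nlinarith [Real.cos_le_one (γ₁ * t), sq_nonneg (1 / γ₁)]
  · -- impossible
    have : M ≤ γ₁ * s := not_lt.1 h1
    have : γ₁ * s ≤ 2 * Real.pi := le_trans hxle (le_of_lt (lt_trans h7 hM2pi))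
    exact absurd this h4
  · -- impossible
    exact absurd (le_trans hxle h8) h4
  · exact le_refl _
end
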